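/- The monotone rearrangement transports one one-dimensional distribution to another: if μ is a Borel probability measure on ℝ whose cumulative distribution function F_μ is continuous (equivalently, μ has no atoms), and ν is any Borel probability measure on ℝ with quantile function F_ν⁻¹(z) = inf{x ∈ ℝ : F_ν(x) ≥ z}, then the pushforward of μ under the (non-decreasing) map x ↦ F_ν⁻¹(F_μ(x)) equals ν. -/

import Mathlib

open MeasureTheory

/-- The quantile function (generalized inverse of the cumulative distribution function
`F_ν(x) = ν((-∞, x])`) of a measure `ν` on `ℝ`. -/
noncomputable def quantile (ν : Measure ℝ) (z : ℝ) : ℝ :=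
  sInf {x : ℝ | z ≤ (ν (Set.Iic x)).toReal}

/-! When `cdf μ` is continuous it pushes `μ` forward to the uniform distribution on `(0, 1)`:
each sublevel set `{x | cdf μ x ≤ t}` is closed, so it is some `Iic c`, and continuity forces
`cdf μ c = t`. On `(0, 1)` the quantile function is the lower adjoint of `cdf ν`
(`quantile ν z ≤ a ↔ z ≤ cdf ν a`), hence it pushes the uniform distribution forward to `ν`.
The theorem is the composite of these two pushforwards. -/

open ProbabilityTheory Set Filter

lemma volume_Iic_inter_Ioo_zero_one {t : ℝ} (ht1 : t ≤ 1) :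
    volume (Iic t ∩ Ioo 0 1) = ENNReal.ofReal t := by
  refine le_antisymm ?_ ?_
  · calc volume (Iic t ∩ Ioo 0 1) ≤ volume (Icc 0 t) :=
          measure_mono fun z hz => ⟨hz.2.1.le, hz.1⟩
      _ = ENNReal.ofReal t := by simp
  · calc ENNReal.ofReal t = volume (Ioo 0 t) := by simp
      _ ≤ volume (Iic t ∩ Ioo 0 1) :=
          measure_mono fun z hz => ⟨hz.2.le, hz.1, hz.2.trans_le ht1⟩

section CDF

variable (μ : Measure ℝ) [IsProbabilityMeasure μ]

lemma toReal_measure_Iic (x : ℝ) : (μ (Iic x)).toReal = cdf μ x := by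
  rw [cdf_eq_real, measureReal_def]

lemma measure_setOf_cdf_le (hμ : Continuous (cdf μ)) {t : ℝ} (ht0 : 0 ≤ t) (ht1 : t < 1) :
    μ {x | cdf μ x ≤ t} = ENNReal.ofReal t := by
  set S := {x | cdf μ x ≤ t}
  rcases S.eq_empty_or_nonempty with hS | hS
  · have ht : t = 0 := by
      refine (ht0.eq_or_lt.resolve_right fun ht => ?_).symm
      obtain ⟨b, hb⟩ := ((tendsto_cdf_atBot μ).eventually_le_const ht).exists
      exact hS.subset (hb : b ∈ S)
    simp [hS, ht]
  have hbdd : BddAbove S := by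
    obtain ⟨u, hu⟩ := ((tendsto_cdf_atTop μ).eventually_const_lt ht1).exists
    refine ⟨u, fun x (hx : cdf μ x ≤ t) => ?_⟩
    exact ((monotone_cdf μ).reflect_lt (hx.trans_lt hu)).le
  have hc : sSup S ∈ S := (isClosed_le hμ continuous_const).csSup_mem hS hbdd
  have hSc : S = Iic (sSup S) :=
    Subset.antisymm (fun x hx => le_csSup hbdd hx) fun x hx => (monotone_cdf μ hx).trans hc
  have hcdf : cdf μ (sSup S) = t := by
    refine le_antisymm hc (not_lt.mp fun hlt => ?_)
    obtain ⟨x, hcx, hx⟩ := ((hμ.tendsto _).eventually (gt_mem_nhds hlt)).exists_gt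
    exact (le_csSup hbdd (hx.le : x ∈ S)).not_gt hcx
  rw [hSc, ← ofReal_cdf, hcdf]

theorem map_cdf_eq_restrict_Ioo (hμ : Continuous (cdf μ)) :
    μ.map (cdf μ) = volume.restrict (Ioo 0 1) := by
  have hm : Measurable (cdf μ) := (monotone_cdf μ).measurable
  refine Measure.ext_of_Iic _ _ fun t => ?_
  rw [Measure.map_apply hm measurableSet_Iic, Measure.restrict_apply measurableSet_Iic]
  change μ {x | cdf μ x ≤ t} = volume (Iic t ∩ Ioo 0 1)
  rcases lt_or_ge t 0 with ht0 | ht0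
  · have hF : {x | cdf μ x ≤ t} = ∅ :=
      eq_empty_of_forall_notMem fun x hx => (ht0.trans_le (cdf_nonneg μ x)).not_ge hx
    have hI : Iic t ∩ Ioo 0 1 = ∅ :=
      eq_empty_of_forall_notMem fun z hz => (ht0.trans hz.2.1).not_ge hz.1
    simp [hF, hI]
  rcases lt_or_ge t 1 with ht1 | ht1
  · rw [measure_setOf_cdf_le μ hμ ht0 ht1, volume_Iic_inter_Ioo_zero_one ht1.le]
  · have hF : {x | cdf μ x ≤ t} = univ :=
      eq_univ_of_forall fun x => (cdf_le_one μ x).trans ht1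
    have hI : Iic t ∩ Ioo 0 1 = Ioo 0 1 :=
      inter_eq_right.mpr fun z hz => hz.2.le.trans ht1
    simp [hF, hI]

end CDF

section Quantile

variable (ν : Measure ℝ) [IsProbabilityMeasure ν]

lemma quantile_eq_sInf (z : ℝ) : quantile ν z = sInf {x | z ≤ cdf ν x} := by
  simp only [quantile, toReal_measure_Iic]

lemma quantile_le_iff_le_cdf {z : ℝ} (hz0 : 0 < z) (hz1 : z < 1) (a : ℝ) :
    quantile ν z ≤ a ↔ z ≤ cdf ν a := by
  set S := {x | z ≤ cdf ν x}
  have hbdd : BddBelow S := by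
    obtain ⟨b, hb⟩ := ((tendsto_cdf_atBot ν).eventually_lt_const hz0).exists
    exact ⟨b, fun x hx => ((monotone_cdf ν).reflect_lt (hb.trans_le hx)).le⟩
  have hS : S.Nonempty := ((tendsto_cdf_atTop ν).eventually_const_le hz1).exists
  rw [quantile_eq_sInf]
  refine ⟨fun h => ?_, fun h => csInf_le hbdd h⟩
  -- right-continuity of `cdf ν` puts the infimum of `S` in `S`
  have hmem : sInf S ∈ S := by
    refine ge_of_tendsto (((cdf ν).right_continuous _).mono_left
      (nhdsWithin_mono _ Ioi_subset_Ici_self)) ?_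
    filter_upwards [self_mem_nhdsWithin] with y hy
    obtain ⟨x, hxS, hxy⟩ := exists_lt_of_csInf_lt hS hy
    exact hxS.trans (monotone_cdf ν hxy.le)
  exact hmem.trans (monotone_cdf ν h)

lemma monotoneOn_quantile : MonotoneOn (quantile ν) (Ioo 0 1) := fun _ hz _ hz' hzz' =>
  (quantile_le_iff_le_cdf ν hz.1 hz.2 _).mpr <|
    hzz'.trans ((quantile_le_iff_le_cdf ν hz'.1 hz'.2 _).mp le_rfl)

lemma aemeasurable_quantile : AEMeasurable (quantile ν) (volume.restrict (Ioo 0 1)) :=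
  aemeasurable_restrict_of_monotoneOn measurableSet_Ioo (monotoneOn_quantile ν)

theorem map_quantile_restrict_Ioo : (volume.restrict (Ioo 0 1)).map (quantile ν) = ν := by
  refine (Measure.ext_of_Iic _ _ fun a => ?_).symm
  have hpre : quantile ν ⁻¹' Iic a ∩ Ioo 0 1 = Iic (cdf ν a) ∩ Ioo 0 1 := by
    ext z
    simp only [mem_inter_iff, mem_preimage, mem_Iic, and_congr_left_iff]
    exact fun hz => quantile_le_iff_le_cdf ν hz.1 hz.2 a
  rw [Measure.map_apply_of_aemeasurable (aemeasurable_quantile ν) measurableSet_Iic,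
    Measure.restrict_apply' measurableSet_Ioo, hpre,
    volume_Iic_inter_Ioo_zero_one (cdf_le_one ν a), ofReal_cdf]

end Quantile

/-- The monotone rearrangement transports one one-dimensional distribution to another: if the
cumulative distribution function of `μ` is continuous, then the pushforward of `μ` under
`x ↦ F_ν⁻¹(F_μ(x))` equals `ν`. -/
theorem monotone_rearrangement_map
    (μ ν : Measure ℝ) [IsProbabilityMeasure μ] [IsProbabilityMeasure ν]
    (hcont : Continuous fun x : ℝ => (μ (Set.Iic x)).toReal) :
    μ.map (fun x : ℝ => quantile ν ((μ (Set.Iic x)).toReal)) = ν := by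
  simp only [toReal_measure_Iic] at hcont ⊢
  have hq : AEMeasurable (quantile ν) (μ.map (cdf μ)) := by
    rw [map_cdf_eq_restrict_Ioo μ hcont]
    exact aemeasurable_quantile ν
  rw [← Function.comp_def,
    ← hq.map_map_of_aemeasurable (monotone_cdf μ).measurable.aemeasurable,
    map_cdf_eq_restrict_Ioo μ hcont, map_quantile_restrict_Ioo]
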